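/- Let L be the Laplacian of a connected undirected weighted graph on N vertices, let U_i ∈ ℝ^{n×p_i} (i = 1, ..., N) be matrices with orthonormal columns, and let U = diag(U_1,...,U_N). If ∩_i im(U_i) = {0}, then Uᵀ(L ⊗ I_n)U is positive definite. -/

import Mathlib

open Matrix Kronecker

/-- The block-diagonal matrix `diag(U_1, ..., U_N)` whose `i`-th diagonal block is
`U_i ∈ ℝ^{n × p_i}`. -/
def blockDiag {N n : ℕ} (p : Fin N → ℕ) (U : ∀ i : Fin N, Matrix (Fin n) (Fin (p i)) ℝ) :
    Matrix (Fin N × Fin n) (Σ i : Fin N, Fin (p i)) ℝ :=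
  Matrix.of fun rc q => if h : q.1 = rc.1 then U rc.1 rc.2 (h ▸ q.2) else 0

lemma blockDiag_mulVec {N n : ℕ} (p : Fin N → ℕ)
    (U : ∀ i : Fin N, Matrix (Fin n) (Fin (p i)) ℝ)
    (x : (Σ i : Fin N, Fin (p i)) → ℝ) (i : Fin N) (m : Fin n) :
    (_root_.blockDiag p U *ᵥ x) (i, m) = ((U i) *ᵥ fun k => x ⟨i, k⟩) m := by
  classical
  simp only [mulVec, dotProduct, _root_.blockDiag, Matrix.of_apply]
  rw [← Finset.univ_sigma_univ, Finset.sum_sigma]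
  rw [Finset.sum_eq_single i]
  · apply Finset.sum_congr rfl
    intro k _
    rw [dif_pos rfl]
  · intro j _ hj
    apply Finset.sum_eq_zero
    intro k _
    simp [_root_.blockDiag, hj]
  · simp

/-- Let `L` be the Laplacian of a connected undirected weighted graph on `N` vertices
(so `ker L = span 1`) and `U_i ∈ ℝ^{n×p_i}` matrices with orthonormal columns such that
`∩_i im(U_i) = {0}`. Then, with `U = diag(U_1,...,U_N)`, the matrix `Uᵀ(L ⊗ I_n)U` is
positive definite. -/
theorem stmt_2 {N n : ℕ} (p : Fin N → ℕ)
    (a L : Matrix (Fin N) (Fin N) ℝ)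
    (hsymm : ∀ i j, a i j = a j i) (hnonneg : ∀ i j, 0 ≤ a i j)
    (hdiag : ∀ i, a i i = 0)
    (hL : ∀ i j, L i j = if i = j then ∑ k, a i k else -(a i j))
    (hconn : ∀ v : Fin N → ℝ, L.mulVec v = 0 → ∃ c : ℝ, v = fun _ => c)
    (U : ∀ i : Fin N, Matrix (Fin n) (Fin (p i)) ℝ)
    (horth : ∀ i, (U i)ᵀ * U i = 1)
    (hinter : ∀ v : Fin n → ℝ, (∀ i, ∃ z, (U i).mulVec z = v) → v = 0) :
    ((blockDiag p U)ᵀ * (L ⊗ₖ (1 : Matrix (Fin n) (Fin n) ℝ)) *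
      blockDiag p U).PosDef := by
  classical
  set K : Matrix (Fin N × Fin n) (Fin N × Fin n) ℝ := L ⊗ₖ (1 : Matrix (Fin n) (Fin n) ℝ)
    with hK
  set B := _root_.blockDiag p U with hB
  -- symmetry of L
  have hLsym : ∀ i j, L i j = L j i := by
    intro i j
    rw [hL, hL]
    by_cases h : i = j
    · subst h; simp
    · simp only [h, Ne.symm h, if_false, hsymm i j]
  -- rewrite L without the if, using hdiag
  have hL' : ∀ i j, L i j = (if i = j then ∑ k, a i k else 0) - a i j := by
    intro i j
    rw [hL]
    by_cases h : i = j
    · subst h; simp [hdiag]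
    · simp [h]
  -- Laplacian quadratic form identity
  have key : ∀ v : Fin N → ℝ,
      2 * (v ⬝ᵥ L *ᵥ v) = ∑ i, ∑ j, a i j * (v i - v j) ^ 2 := by
    intro v
    have expand : v ⬝ᵥ L *ᵥ v = ∑ i, ∑ j, v i * L i j * v j := by
      simp [dotProduct, mulVec, Finset.mul_sum, mul_assoc]
    have term : ∀ i j, v i * L i j * v j =
        (if i = j then (∑ k, a i k) * (v i * v i) else 0) - a i j * (v i * v j) := by
      intro i j
      rw [hL']
      by_cases h : i = j
      · subst h; simp; ring
      · simp [h]; ring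
    have hS1 : ∀ i, (∑ j, if i = j then (∑ k, a i k) * (v i * v i) else 0)
        = ∑ j, a i j * (v i * v i) := by
      intro i
      rw [Finset.sum_ite_eq, if_pos (Finset.mem_univ i), Finset.sum_mul]
    have hswap : (∑ i, ∑ j, a i j * (v j * v j)) = ∑ i, ∑ j, a i j * (v i * v i) := by
      rw [Finset.sum_comm]
      exact Finset.sum_congr rfl fun i _ => Finset.sum_congr rfl fun j _ => by rw [hsymm]
    have hrhs : ∀ i j, a i j * (v i - v j) ^ 2 =
        a i j * (v i * v i) - 2 * (a i j * (v i * v j)) + a i j * (v j * v j) := by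
      intro i j; ring
    have hlhs : v ⬝ᵥ L *ᵥ v = (∑ i, ∑ j, a i j * (v i * v i)) - ∑ i, ∑ j, a i j * (v i * v j) := by
      rw [expand]
      simp_rw [term, Finset.sum_sub_distrib, hS1]
    have hrhs2 : ∑ i, ∑ j, a i j * (v i - v j) ^ 2 =
        (∑ i, ∑ j, a i j * (v i * v i)) - 2 * (∑ i, ∑ j, a i j * (v i * v j))
          + (∑ i, ∑ j, a i j * (v j * v j)) := by
      simp_rw [hrhs, Finset.sum_add_distrib, Finset.sum_sub_distrib, ← Finset.mul_sum]
    rw [hlhs, hrhs2, hswap]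
    ring
  -- nonnegativity of the Laplacian quadratic form
  have hqnn : ∀ v : Fin N → ℝ, 0 ≤ v ⬝ᵥ L *ᵥ v := by
    intro v
    have h2 : 0 ≤ 2 * (v ⬝ᵥ L *ᵥ v) := by
      rw [key v]
      apply Finset.sum_nonneg
      intro i _
      apply Finset.sum_nonneg
      intro j _
      exact mul_nonneg (hnonneg i j) (sq_nonneg _)
    linarith
  -- from zero quadratic form to constant vector
  have hconst : ∀ v : Fin N → ℝ, v ⬝ᵥ L *ᵥ v = 0 → ∃ c : ℝ, v = fun _ => c := by
    intro v hv
    apply hconn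
    have hz : ∀ i j, a i j * (v i - v j) ^ 2 = 0 := by
      have hsum : ∑ i, ∑ j, a i j * (v i - v j) ^ 2 = 0 := by
        rw [← key v, hv]; ring
      intro i j
      have h1 := (Finset.sum_eq_zero_iff_of_nonneg (fun i _ => Finset.sum_nonneg
        (fun j _ => mul_nonneg (hnonneg i j) (sq_nonneg _)))).mp hsum i (Finset.mem_univ i)
      exact (Finset.sum_eq_zero_iff_of_nonneg
        (fun j _ => mul_nonneg (hnonneg i j) (sq_nonneg _))).mp h1 j (Finset.mem_univ j)
    funext i
    have : (L *ᵥ v) i = ∑ j, a i j * (v i - v j) := by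
      simp only [mulVec, dotProduct]
      have term2 : ∀ j, L i j * v j = (if i = j then (∑ k, a i k) * v j else 0) - a i j * v j := by
        intro j
        rw [hL']
        by_cases h : i = j
        · subst h; simp; ring
        · simp [h]
      have hrterm : ∀ j, a i j * (v i - v j) = a i j * v i - a i j * v j := fun j => by ring
      simp_rw [term2, hrterm, Finset.sum_sub_distrib, Finset.sum_ite_eq,
        if_pos (Finset.mem_univ i), ← Finset.sum_mul]
    rw [this]
    apply Finset.sum_eq_zero
    intro j _
    rcases mul_eq_zero.mp (hz i j) with h | h
    · simp [h]
    · have : v i - v j = 0 := by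
        have := sq_eq_zero_iff.mp h
        exact this
      rw [this, mul_zero]
  -- quadratic form of K decomposes coordinatewise
  have hKquad : ∀ w : Fin N × Fin n → ℝ,
      w ⬝ᵥ K *ᵥ w = ∑ m : Fin n, (fun i => w (i, m)) ⬝ᵥ L *ᵥ (fun i => w (i, m)) := by
    intro w
    simp only [hK, dotProduct, mulVec, kroneckerMap_apply, Matrix.one_apply,
      Fintype.sum_prod_type, mul_ite, mul_one, mul_zero, ite_mul, zero_mul,
      Finset.sum_ite_eq, Finset.mem_univ, if_true]
    rw [Finset.sum_comm]
  -- the full quadratic form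
  have hform : ∀ x : (Σ i : Fin N, Fin (p i)) → ℝ,
      x ⬝ᵥ (Bᵀ * K * B) *ᵥ x = (B *ᵥ x) ⬝ᵥ K *ᵥ (B *ᵥ x) := by
    intro x
    rw [← mulVec_mulVec, ← mulVec_mulVec, dotProduct_mulVec, vecMul_transpose]
  constructor
  · -- Hermitian
    have hKsym : Kᵀ = K := by
      ext ⟨i, m⟩ ⟨j, l⟩
      simp only [hK, transpose_apply, kroneckerMap_apply, Matrix.one_apply]
      rw [hLsym j i]
      by_cases h : m = l
      · subst h; simp
      · simp [h, Ne.symm h]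
    have : (Bᵀ * K * B)ᵀ = Bᵀ * K * B := by
      rw [transpose_mul, transpose_mul, transpose_transpose, hKsym, Matrix.mul_assoc]
    rw [Matrix.IsHermitian]
    ext i j
    rw [conjTranspose_apply]
    simp only [RCLike.star_def, starRingEnd_apply, star_trivial]
    exact congrFun (congrFun this i) j
  · intro x hx
    simp only [star_trivial]
    have hle : 0 ≤ x ⬝ᵥ (Bᵀ * K * B) *ᵥ x := by
      rw [hform, hKquad]
      exact Finset.sum_nonneg fun m _ => hqnn _
    rcases lt_or_eq_of_le hle with h | h
    · simpa [dotProduct, mulVec, Finsupp.sum_fintype, Finset.mul_sum, mul_assoc] using h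
    exfalso
    apply hx
    -- the quadratic form is zero; derive x = 0
    have hsum0 : ∑ m : Fin n, (fun i => (B *ᵥ x) (i, m)) ⬝ᵥ L *ᵥ (fun i => (B *ᵥ x) (i, m))
        = 0 := by
      rw [← hKquad, ← hform, ← h]
    have hm0 : ∀ m : Fin n,
        (fun i => (B *ᵥ x) (i, m)) ⬝ᵥ L *ᵥ (fun i => (B *ᵥ x) (i, m)) = 0 :=
      fun m => (Finset.sum_eq_zero_iff_of_nonneg (fun m _ => hqnn _)).mp hsum0 m
        (Finset.mem_univ m)
    -- each coordinate slice is constant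
    have hc : ∀ m : Fin n, ∃ c : ℝ, ∀ i : Fin N, (B *ᵥ x) (i, m) = c := by
      intro m
      obtain ⟨c, hc⟩ := hconst _ (hm0 m)
      exact ⟨c, fun i => congrFun hc i⟩
    choose c hcw using hc
    -- c is in the image of every U i
    have hNpos : 0 < N := by
      rcases Nat.eq_zero_or_pos N with h0 | h0
      · exfalso; apply hx; ext q; exact absurd q.1.2 (by omega)
      · exact h0
    have hcv : ∀ i : Fin N, (U i) *ᵥ (fun k => x ⟨i, k⟩) = c := by
      intro i
      funext m
      rw [← blockDiag_mulVec p U x i m]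
      exact hcw m i
    have hc0 : c = 0 := hinter c fun i => ⟨fun k => x ⟨i, k⟩, hcv i⟩
    -- hence each block of x vanishes
    ext q
    obtain ⟨i, k⟩ := q
    have hU0 : (U i) *ᵥ (fun k => x ⟨i, k⟩) = 0 := by rw [hcv i, hc0]
    have : (fun k => x ⟨i, k⟩) = 0 := by
      have h1 : ((U i)ᵀ * U i) *ᵥ (fun k => x ⟨i, k⟩) = 0 := by
        rw [← mulVec_mulVec, hU0, mulVec_zero]
      rw [horth i, one_mulVec] at h1
      exact h1
    exact congrFun this k
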